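/- arXiv:1706.08015 — 4 statements merged into one kernel-verified Lean document; each statement's English description precedes it below -/
import Mathlib

section
/- Suppose R(X_e) > 1 for all e ∈ E(T). Then the minimum cost Σ_e l(e)c(e) over all r-feasible edge-capacities c : E(T) → ℤ≥0 equals Σ_{e ∈ E(T)} l(e)·R(X_e) + min_F Σ_{e ∈ F} l(e), where the minimum is over all inner-odd joins F with respect to (T, R). -/
open scoped Classical

/-- The parity of a sum of naturals equals the parity of the number of odd terms. -/
lemma sum_mod_two_card_aux {α : Type*} (s : Finset α) (f : α → ℕ) :
    (∑ e ∈ s, f e) % 2 = (s.filter fun e => f e % 2 = 1).card % 2 := by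
  classical
  rw [Finset.sum_nat_mod, Finset.card_filter]
  congr 1
  exact Finset.sum_congr rfl fun e _ => by
    rcases Nat.mod_two_eq_zero_or_one (f e) with h | h <;> simp [h]

/-- Suppose `R(X_e) > 1` for all edges `e` of the representing tree `T`.  Then the
minimum cost `Σ_e l(e)·c(e)` over all `r`-feasible integer edge-capacities `c`
((c1) `c(δ_T(v))` even at inner vertices, (c2) `c e ≥ R(X_e)`) equals
`Σ_{e ∈ E(T)} l(e)·R(X_e)` plus the minimum cost of an inner-odd join `F`
(an edge subset with `|δ_T(v) ∩ F| ≡ c^R(δ_T(v)) mod 2` at every inner vertex `v`). -/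
theorem stmt_12 {W : Type*} [Fintype W] [DecidableEq W]
    (T : SimpleGraph W) (hT : T.IsTree)
    (V : Finset W) (v₀ : W) (hv₀ : v₀ ∈ V)
    (r : W → W → ℕ) (hrsymm : ∀ i j, r i j = r j i)
    (Xe : Sym2 W → Finset W)
    (hXe : ∀ e, Xe e = V.filter fun x => (T.deleteEdges {e}).Reachable v₀ x)
    (R : Finset W → ℕ)
    (hR : ∀ X : Finset W, R X = (X ×ˢ (V \ X)).sup fun p => r p.1 p.2)
    (l : Sym2 W → ℝ) (hl : ∀ e, 0 ≤ l e)
    (hR2 : ∀ e ∈ T.edgeFinset, 1 < R (Xe e)) :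
    sInf {x : ℝ | ∃ c : Sym2 W → ℕ,
        (∀ v : W, v ∉ V → Even (∑ e ∈ T.edgeFinset.filter (fun e => v ∈ e), c e)) ∧
        (∀ e ∈ T.edgeFinset, R (Xe e) ≤ c e) ∧
        x = ∑ e ∈ T.edgeFinset, l e * (c e : ℝ)} =
      (∑ e ∈ T.edgeFinset, l e * (R (Xe e) : ℝ)) +
        sInf {x : ℝ | ∃ F ⊆ T.edgeFinset,
          (∀ v : W, v ∉ V →
            (∑ e ∈ T.edgeFinset.filter (fun e => v ∈ e), R (Xe e)) % 2 =
              (F.filter fun e => v ∈ e).card % 2) ∧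
          x = ∑ e ∈ F, l e} := by
  classical
  set S : ℝ := ∑ e ∈ T.edgeFinset, l e * (R (Xe e) : ℝ) with hSdef
  set A : Set ℝ := {x : ℝ | ∃ c : Sym2 W → ℕ,
        (∀ v : W, v ∉ V → Even (∑ e ∈ T.edgeFinset.filter (fun e => v ∈ e), c e)) ∧
        (∀ e ∈ T.edgeFinset, R (Xe e) ≤ c e) ∧
        x = ∑ e ∈ T.edgeFinset, l e * (c e : ℝ)} with hAdef
  set B : Set ℝ := {x : ℝ | ∃ F ⊆ T.edgeFinset,
          (∀ v : W, v ∉ V →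
            (∑ e ∈ T.edgeFinset.filter (fun e => v ∈ e), R (Xe e)) % 2 =
              (F.filter fun e => v ∈ e).card % 2) ∧
          x = ∑ e ∈ F, l e} with hBdef
  -- every inner-odd join `F` gives the feasible capacity `R + 1_F`
  have hcon : ∀ F : Finset (Sym2 W), F ⊆ T.edgeFinset →
      (∀ v : W, v ∉ V →
        (∑ e ∈ T.edgeFinset.filter (fun e => v ∈ e), R (Xe e)) % 2 =
          (F.filter fun e => v ∈ e).card % 2) →
      (S + ∑ e ∈ F, l e) ∈ A := by
    intro F hFsub hFpar
    refine ⟨fun e => R (Xe e) + if e ∈ F then 1 else 0, ?_, ?_, ?_⟩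
    · intro v hv
      have hcard : ∑ e ∈ T.edgeFinset.filter (fun e => v ∈ e), (if e ∈ F then 1 else 0)
          = (F.filter fun e => v ∈ e).card := by
        rw [Finset.sum_ite_mem, Finset.sum_const, smul_eq_mul, mul_one]
        congr 1
        ext e
        simp only [Finset.mem_inter, Finset.mem_filter]
        constructor
        · rintro ⟨⟨he, hve⟩, heF⟩; exact ⟨heF, hve⟩
        · rintro ⟨heF, hve⟩; exact ⟨⟨hFsub heF, hve⟩, heF⟩
      have := hFpar v hv
      rw [Finset.sum_add_distrib, hcard, Nat.even_iff]
      omega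
    · intro e _; exact Nat.le_add_right _ _
    · have : ∀ e ∈ T.edgeFinset,
          l e * ((R (Xe e) + if e ∈ F then 1 else 0 : ℕ) : ℝ)
            = l e * (R (Xe e) : ℝ) + (if e ∈ F then l e else 0) := by
        intro e _
        push_cast
        split <;> ring_nf <;> simp
      rw [Finset.sum_congr rfl this, Finset.sum_add_distrib, Finset.sum_ite_mem,
        Finset.inter_eq_right.mpr hFsub]
  -- every feasible capacity `c` dominates `S +` the cost of some inner-odd join
  have hext : ∀ x ∈ A, ∃ b ∈ B, S + b ≤ x := by
    rintro x ⟨c, hc1, hc2, rfl⟩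
    refine ⟨∑ e ∈ T.edgeFinset.filter (fun e => ¬ c e % 2 = R (Xe e) % 2), l e,
      ⟨_, Finset.filter_subset _ _, ?_, rfl⟩, ?_⟩
    · intro v hv
      have hfil : (T.edgeFinset.filter (fun e => ¬ c e % 2 = R (Xe e) % 2)).filter
            (fun e => v ∈ e)
          = (T.edgeFinset.filter fun e => v ∈ e).filter
            (fun e => (c e - R (Xe e)) % 2 = 1) := by
        ext e
        simp only [Finset.mem_filter]
        constructor
        · rintro ⟨⟨he, hpar⟩, hve⟩
          have := hc2 e he
          exact ⟨⟨he, hve⟩, by omega⟩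
        · rintro ⟨⟨he, hve⟩, hd⟩
          have := hc2 e he
          exact ⟨⟨he, by omega⟩, hve⟩
      rw [hfil, ← sum_mod_two_card_aux]
      have hsplit : ∑ e ∈ T.edgeFinset.filter (fun e => v ∈ e), c e
          = (∑ e ∈ T.edgeFinset.filter (fun e => v ∈ e), R (Xe e))
            + ∑ e ∈ T.edgeFinset.filter (fun e => v ∈ e), (c e - R (Xe e)) := by
        rw [← Finset.sum_add_distrib]
        refine Finset.sum_congr rfl fun e he => ?_
        have := hc2 e (Finset.mem_filter.mp he).1
        omega
      have heven := hc1 v hv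
      rw [hsplit, Nat.even_add] at heven
      rcases Nat.even_or_odd (∑ e ∈ T.edgeFinset.filter (fun e => v ∈ e), R (Xe e))
        with h | h
      · have h2 := heven.mp h
        rw [Nat.even_iff] at h h2; omega
      · have h2 : ¬ Even (∑ e ∈ T.edgeFinset.filter (fun e => v ∈ e), (c e - R (Xe e))) := by
          intro h2; exact (Nat.not_even_iff_odd.mpr h) (heven.mpr h2)
        rw [Nat.odd_iff] at h
        rw [Nat.not_even_iff] at h2
        omega
    · -- cost comparison
      rw [Finset.sum_filter]
      have : ∀ e ∈ T.edgeFinset,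
          l e * (R (Xe e) : ℝ) + (if ¬ c e % 2 = R (Xe e) % 2 then l e else 0)
            ≤ l e * (c e : ℝ) := by
        intro e he
        have hce := hc2 e he
        have hle := hl e
        split
        · rename_i hodd
          have : R (Xe e) + 1 ≤ c e := by omega
          have : ((R (Xe e) : ℝ) + 1) ≤ (c e : ℝ) := by exact_mod_cast this
          nlinarith
        · have : (R (Xe e) : ℝ) ≤ (c e : ℝ) := by exact_mod_cast hce
          nlinarith
      calc S + ∑ e ∈ T.edgeFinset, (if ¬ c e % 2 = R (Xe e) % 2 then l e else 0)
          = ∑ e ∈ T.edgeFinset,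
              (l e * (R (Xe e) : ℝ) + (if ¬ c e % 2 = R (Xe e) % 2 then l e else 0)) := by
            rw [Finset.sum_add_distrib]
        _ ≤ ∑ e ∈ T.edgeFinset, l e * (c e : ℝ) := Finset.sum_le_sum this
  -- a canonical inner-odd join: edges with odd `R`
  have hF0 : (∑ e ∈ T.edgeFinset.filter (fun e => R (Xe e) % 2 = 1), l e) ∈ B := by
    refine ⟨_, Finset.filter_subset _ _, ?_, rfl⟩
    intro v hv
    rw [sum_mod_two_card_aux]
    congr 2
    ext e
    simp only [Finset.mem_filter]
    tauto
  have hBne : B.Nonempty := ⟨_, hF0⟩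
  have hAne : A.Nonempty := by
    obtain ⟨F, hFsub, hFpar, -⟩ := hF0
    exact ⟨_, hcon F hFsub hFpar⟩
  have hBbd : BddBelow B := by
    refine ⟨0, ?_⟩
    rintro b ⟨F, hFsub, -, rfl⟩
    exact Finset.sum_nonneg fun e _ => hl e
  have hAbd : BddBelow A := by
    refine ⟨0, ?_⟩
    rintro a ⟨c, -, -, rfl⟩
    exact Finset.sum_nonneg fun e _ => mul_nonneg (hl e) (Nat.cast_nonneg _)
  refine le_antisymm ?_ ?_
  · have h1 : sInf A - S ≤ sInf B := by
      refine le_csInf hBne fun b hb => ?_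
      obtain ⟨F, hFsub, hFpar, rfl⟩ := hb
      have := csInf_le hAbd (hcon F hFsub hFpar)
      linarith
    linarith
  · refine le_csInf hAne fun a ha => ?_
    obtain ⟨b, hbB, hba⟩ := hext a ha
    have := csInf_le hBbd hbB
    linarith
end

section
/- If c is an r-feasible edge-capacity with c(e) ≥ R(X_e) + 2 for some edge e, then c − 2·χ_e is also r-feasible and has cost at most that of c. Hence some minimum-cost r-feasible capacity satisfies c(e) ∈ {R(X_e), R(X_e)+1} for all e ∈ E(T). -/
open scoped Classical

/-- If `c` is an `r`-feasible edge-capacity with `c e ≥ R(X_e) + 2` for some edge `e`,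
then `c − 2·χ_e` is also `r`-feasible with cost at most that of `c`.  Hence some
minimum-cost `r`-feasible capacity satisfies `c e ∈ {R(X_e), R(X_e)+1}` for every
edge `e` of `T`. -/
theorem stmt_13 {W : Type*} [Fintype W] [DecidableEq W]
    (T : SimpleGraph W) (hT : T.IsTree)
    (V : Finset W) (v₀ : W) (hv₀ : v₀ ∈ V)
    (r : W → W → ℕ) (hrsymm : ∀ i j, r i j = r j i)
    (Xe : Sym2 W → Finset W)
    (hXe : ∀ e, Xe e = V.filter fun x => (T.deleteEdges {e}).Reachable v₀ x)
    (R : Finset W → ℕ)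
    (hR : ∀ X : Finset W, R X = (X ×ˢ (V \ X)).sup fun p => r p.1 p.2)
    (l : Sym2 W → ℝ) (hl : ∀ e, 0 ≤ l e)
    (Feasible : (Sym2 W → ℕ) → Prop)
    (hFeas : ∀ c, Feasible c ↔
      (∀ v : W, v ∉ V → Even (∑ e ∈ T.edgeFinset.filter (fun e => v ∈ e), c e)) ∧
      (∀ e ∈ T.edgeFinset, R (Xe e) ≤ c e))
    (cost : (Sym2 W → ℕ) → ℝ)
    (hcost : ∀ c, cost c = ∑ e ∈ T.edgeFinset, l e * (c e : ℝ)) :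
    (∀ c : Sym2 W → ℕ, Feasible c → ∀ e₀ ∈ T.edgeFinset, R (Xe e₀) + 2 ≤ c e₀ →
      Feasible (fun e => if e = e₀ then c e - 2 else c e) ∧
        cost (fun e => if e = e₀ then c e - 2 else c e) ≤ cost c) ∧
    (∃ c : Sym2 W → ℕ, Feasible c ∧ (∀ c', Feasible c' → cost c ≤ cost c') ∧
      ∀ e ∈ T.edgeFinset, c e = R (Xe e) ∨ c e = R (Xe e) + 1) := by
  -- Part 1: the reduction step
  have hred : ∀ c : Sym2 W → ℕ, Feasible c → ∀ e₀ ∈ T.edgeFinset, R (Xe e₀) + 2 ≤ c e₀ →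
      Feasible (fun e => if e = e₀ then c e - 2 else c e) ∧
        cost (fun e => if e = e₀ then c e - 2 else c e) ≤ cost c := by
    intro c hc e₀ he₀ hge
    rw [hFeas] at hc
    obtain ⟨hpar, hbd⟩ := hc
    refine ⟨(hFeas _).mpr ⟨?_, ?_⟩, ?_⟩
    · intro v hv
      have h1 := hpar v hv
      by_cases hmem : e₀ ∈ T.edgeFinset.filter (fun e => v ∈ e)
      · rw [← Finset.add_sum_erase _ _ hmem] at h1 ⊢
        have heq : ∑ e ∈ (T.edgeFinset.filter (fun e => v ∈ e)).erase e₀,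
            (if e = e₀ then c e - 2 else c e)
            = ∑ e ∈ (T.edgeFinset.filter (fun e => v ∈ e)).erase e₀, c e :=
          Finset.sum_congr rfl fun e he => if_neg (Finset.ne_of_mem_erase he)
        rw [heq, if_pos rfl]
        obtain ⟨k, hk⟩ := h1
        exact ⟨k - 1, by omega⟩
      · have heq : ∑ e ∈ T.edgeFinset.filter (fun e => v ∈ e),
            (if e = e₀ then c e - 2 else c e)
            = ∑ e ∈ T.edgeFinset.filter (fun e => v ∈ e), c e :=
          Finset.sum_congr rfl fun e he => if_neg (by rintro rfl; exact hmem he)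
        rw [heq]; exact h1
    · intro e he
      by_cases h : e = e₀
      · rw [if_pos h]; subst h; omega
      · rw [if_neg h]; exact hbd e he
    · rw [hcost, hcost]
      apply Finset.sum_le_sum
      intro e he
      by_cases h : e = e₀
      · rw [if_pos h]
        exact mul_le_mul_of_nonneg_left (Nat.cast_le.mpr (Nat.sub_le _ _)) (hl e)
      · rw [if_neg h]
  refine ⟨hred, ?_⟩
  -- agreement on edges preserves feasibility and cost
  have hagree : ∀ c₁ c₂ : Sym2 W → ℕ, (∀ e ∈ T.edgeFinset, c₁ e = c₂ e) →
      (Feasible c₁ → Feasible c₂) ∧ cost c₁ = cost c₂ := by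
    intro c₁ c₂ h
    constructor
    · intro hc
      rw [hFeas] at hc ⊢
      refine ⟨fun v hv => ?_, fun e he => (h e he) ▸ hc.2 e he⟩
      have := hc.1 v hv
      rwa [Finset.sum_congr rfl (fun e he => (h e (Finset.mem_filter.mp he).1).symm)]
    · rw [hcost, hcost]
      exact Finset.sum_congr rfl fun e he => by rw [h e he]
  -- the all-even capacity is feasible
  set q : Sym2 W → ℕ := fun e => R (Xe e) + R (Xe e) % 2 with hq
  have hqeven : ∀ e, Even (q e) := fun e => ⟨(R (Xe e) + R (Xe e) % 2) / 2, by simp [hq]; omega⟩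
  have hqfeas : Feasible q := by
    rw [hFeas]
    refine ⟨fun v hv => ?_, fun e he => Nat.le_add_right _ _⟩
    rw [even_iff_two_dvd]
    exact Finset.dvd_sum fun e _ => (even_iff_two_dvd).mp (hqeven e)
  -- the reduction process: any feasible capacity can be improved to one in {R, R+1}
  have key : ∀ n, ∀ c : Sym2 W → ℕ, Feasible c → (∑ e ∈ T.edgeFinset, c e) ≤ n →
      ∃ c', Feasible c' ∧ cost c' ≤ cost c ∧
        ∀ e ∈ T.edgeFinset, c' e = R (Xe e) ∨ c' e = R (Xe e) + 1 := by
    intro n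
    induction n with
    | zero =>
      intro c hc hsum
      refine ⟨c, hc, le_refl _, fun e he => ?_⟩
      have h0 : c e = 0 := by
        have := Finset.single_le_sum (f := c) (fun i _ => Nat.zero_le _) he
        omega
      have := ((hFeas c).mp hc).2 e he
      omega
    | succ n ih =>
      intro c hc hsum
      by_cases hbig : ∃ e₀ ∈ T.edgeFinset, R (Xe e₀) + 2 ≤ c e₀
      · obtain ⟨e₀, he₀, hge⟩ := hbig
        obtain ⟨hf1, hcost1⟩ := hred c hc e₀ he₀ hge
        have h2 : 2 ≤ c e₀ := by omega
        have hle : c e₀ ≤ ∑ e ∈ T.edgeFinset, c e :=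
          Finset.single_le_sum (f := c) (fun i _ => Nat.zero_le _) he₀
        have hsum1 : ∑ e ∈ T.edgeFinset, (if e = e₀ then c e - 2 else c e)
            = (∑ e ∈ T.edgeFinset, c e) - 2 := by
          rw [← Finset.add_sum_erase _ _ he₀, ← Finset.add_sum_erase _ c he₀, if_pos rfl]
          rw [Finset.sum_congr rfl (fun e he => if_neg (Finset.ne_of_mem_erase he))]
          have hee : (T.edgeFinset.erase e₀).sum c = ∑ x ∈ T.edgeFinset.erase e₀, c x := rfl
          omega
        obtain ⟨c', hc', hcost', hval'⟩ := ih _ hf1 (by omega)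
        exact ⟨c', hc', le_trans hcost' hcost1, hval'⟩
      · push_neg at hbig
        refine ⟨c, hc, le_refl _, fun e he => ?_⟩
        have h1 := ((hFeas c).mp hc).2 e he
        have h2 := hbig e he
        omega
  -- the finite candidate family
  set F : (Sym2 W → Bool) → (Sym2 W → ℕ) :=
    fun b e => R (Xe e) + (if b e then 1 else 0) with hF
  set S : Finset (Sym2 W → Bool) := Finset.univ.filter (fun b => Feasible (F b)) with hS
  have hSne : S.Nonempty := by
    refine ⟨fun e => decide (R (Xe e) % 2 = 1), Finset.mem_filter.mpr ⟨Finset.mem_univ _, ?_⟩⟩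
    have : F (fun e => decide (R (Xe e) % 2 = 1)) = q := by
      funext e
      simp only [hF, hq]
      by_cases h : R (Xe e) % 2 = 1 <;> simp [h] <;> omega
    rw [this]; exact hqfeas
  obtain ⟨b₀, hb₀S, hb₀min⟩ := Finset.exists_min_image S (fun b => cost (F b)) hSne
  have hb₀feas : Feasible (F b₀) := (Finset.mem_filter.mp hb₀S).2
  refine ⟨F b₀, hb₀feas, ?_, fun e he => ?_⟩
  · intro c' hc'
    obtain ⟨c'', hc'', hcost'', hval''⟩ := key _ c' hc' (le_refl _)
    set b' : Sym2 W → Bool := fun e =>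
      if e ∈ T.edgeFinset then decide (c'' e = R (Xe e) + 1) else decide (R (Xe e) % 2 = 1)
      with hb'
    have hagree' : ∀ e ∈ T.edgeFinset, c'' e = F b' e := by
      intro e he
      simp only [hF, hb', if_pos he]
      rcases hval'' e he with h | h <;> simp [h]
    obtain ⟨hfeasimp, hcosteq⟩ := hagree c'' (F b') hagree'
    have hb'S : b' ∈ S := Finset.mem_filter.mpr ⟨Finset.mem_univ _, hfeasimp hc''⟩
    calc cost (F b₀) ≤ cost (F b') := hb₀min b' hb'S
      _ = cost c'' := hcosteq.symm
      _ ≤ cost c' := hcost''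
  · simp only [hF]
    by_cases h : b₀ e <;> simp [h]
end

section
/- Counterexample to decomposition (Remark 2.5): Let V = {u₁,u₂,u₃,v₁,v₂,v₃} with r(uᵢ,uⱼ) = r(vᵢ,vⱼ) = 3 for i ≠ j and r(uᵢ,vⱼ) = 0, and let a be the tree metric given by T with V(T) = V ∪ {u,v}, edges uv and uuᵢ, vvᵢ, lengths l(uv) = 1, l(uuᵢ) = l(vvᵢ) = 2. Then the integer capacity y with y(uᵢuⱼ) = y(vᵢvⱼ) = 1 for i < j, y(uᵢvᵢ) = 1, y(uᵢvⱼ) = 0 for i ≠ j, is a realization of r, and its cost is strictly less than the minimum total cost of any pair of integer realizations obtained by solving the two subproblems on {u₁,u₂,u₃} and {v₁,v₂,v₃} independently (i.e., any integer realization y' with y'(uᵢvⱼ) = 0 for all i,j has strictly larger cost). -/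
open scoped Classical

/-- Nodes: `(false, i)` is `uᵢ`, `(true, i)` is `vᵢ`. -/
abbrev Vtx : Type := Bool × Fin 3

/-- The tree metric of Remark 2.5: within a side the distance is `2 + 2 = 4`,
across the sides it is `2 + 1 + 2 = 5`. -/
noncomputable def a15 : Vtx → Vtx → ℝ := fun p q =>
  if p = q then 0 else if p.1 = q.1 then 4 else 5

/-- The requirement: `r(uᵢ,uⱼ) = r(vᵢ,vⱼ) = 3` for `i ≠ j`, and `0` across the sides. -/
def r15 : Vtx → Vtx → ℕ := fun p q => if p.1 = q.1 ∧ p.2 ≠ q.2 then 3 else 0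

/-- The claimed optimal integer realization: capacity 1 on each within-side pair and on
each pair `uᵢvᵢ`. -/
def r15y : Vtx → Vtx → ℕ := fun p q =>
  if p.1 = q.1 ∧ p.2 ≠ q.2 then 1 else if p.1 ≠ q.1 ∧ p.2 = q.2 then 1 else 0

/-- `y` is an integer realization of `r15`: every cut separating `s` from `t` has
capacity at least `r15 s t`. -/
def IsRealization15 (y : Vtx → Vtx → ℕ) : Prop :=
  ∀ s t : Vtx, s ≠ t → ∀ X : Finset Vtx, s ∈ X → t ∉ X →
    r15 s t ≤ ∑ i ∈ X, ∑ j ∈ Xᶜ, y i j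

/-- Total cost `Σ_{e ∈ E(K_V)} a(e)·y(e)`, written as half the sum over ordered pairs. -/
noncomputable def cost15 (y : Vtx → Vtx → ℕ) : ℝ :=
  (1 / 2) * ∑ i : Vtx, ∑ j : Vtx, a15 i j * (y i j : ℝ)

/-! Cutting off a single vertex shows that every vertex of a realization has degree at least 3.
Without cross edges, each side is a triangle whose three degrees sum to at least 9, hence (the
degree sum being even) its total capacity is at least 5, at cost 4 per unit: at least 40 in all,
while `r15y` costs 2·3·4 + 3·5 = 39. -/

theorem even_sum_sum_of_symm {ι : Type*} [Fintype ι] (m : ι → ι → ℕ)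
    (hsymm : ∀ i j, m i j = m j i) (hdiag : ∀ i, m i i = 0) :
    Even (∑ i, ∑ j, m i j) := by
  let _ : LinearOrder ι := LinearOrder.lift' _ (Fintype.equivFin ι).injective
  have hsplit : ∀ i j, m i j = (if i < j then m i j else 0) + (if j < i then m i j else 0) := by
    intro i j
    rcases lt_trichotomy i j with h | rfl | h
    · simp [h, h.not_gt]
    · simp [hdiag]
    · simp [h, h.not_gt]
  have hswap : ∑ i, ∑ j, (if j < i then m i j else 0) = ∑ i, ∑ j, (if i < j then m i j else 0) := by
    rw [Finset.sum_comm]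
    simp only [hsymm]
  refine ⟨∑ i, ∑ j, if i < j then m i j else 0, ?_⟩
  conv_lhs => enter [2, i, 2, j]; rw [hsplit i j]
  simp only [Finset.sum_add_distrib, hswap]

theorem ten_le_sum_sum_of_symm {m : Fin 3 → Fin 3 → ℕ}
    (hsymm : ∀ i j, m i j = m j i) (hdiag : ∀ i, m i i = 0) (hrow : ∀ i, 3 ≤ ∑ j, m i j) :
    10 ≤ ∑ i, ∑ j, m i j := by
  have hnine : 9 ≤ ∑ i, ∑ j, m i j := by
    simpa using Finset.card_nsmul_le_sum Finset.univ (fun i => ∑ j, m i j) 3 fun i _ => hrow i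
  obtain ⟨k, hk⟩ := even_sum_sum_of_symm m hsymm hdiag
  omega

theorem isRealization15_r15y : IsRealization15 r15y := by
  unfold IsRealization15; decide

theorem three_le_sum_side {y : Vtx → Vtx → ℕ} (hy : IsRealization15 y)
    (hcross : ∀ p q : Vtx, p.1 ≠ q.1 → y p q = 0) (b : Bool) (i : Fin 3) :
    3 ≤ ∑ j, y (b, i) (b, j) := by
  have hcut := hy (b, i) (b, i + 1) (by simp) {(b, i)} (Finset.mem_singleton_self _) (by simp)
  have hr : r15 (b, i) (b, i + 1) = 3 := by simp [r15]
  rw [hr, Finset.sum_singleton] at hcut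
  calc 3 ≤ ∑ j ∈ {((b, i) : Vtx)}ᶜ, y (b, i) j := hcut
    _ ≤ ∑ j, y (b, i) j := Finset.sum_le_sum_of_subset (Finset.subset_univ _)
    _ = ∑ j, y (b, i) (b, j) := by
      rw [Fintype.sum_prod_type, Fintype.sum_bool]
      cases b <;> simp [hcross]

theorem cost15_r15y : cost15 r15y = 39 := by
  simp only [cost15, Fintype.sum_prod_type, Fintype.sum_bool, Fin.sum_univ_three]
  norm_num [a15, r15y, Prod.ext_iff, Fin.ext_iff]

theorem cost15_of_no_cross {y : Vtx → Vtx → ℕ} (hdiag : ∀ p, y p p = 0)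
    (hcross : ∀ p q : Vtx, p.1 ≠ q.1 → y p q = 0) :
    cost15 y = 2 * ((∑ b : Bool, ∑ i, ∑ j, y (b, i) (b, j) : ℕ) : ℝ) := by
  simp only [cost15, Fintype.sum_prod_type, Fintype.sum_bool, Fin.sum_univ_three]
  simp [a15, Prod.ext_iff, Fin.ext_iff, hcross, hdiag]
  ring

/-- Counterexample to decomposition (Remark 2.5): `r15y` is an integer realization of
`r15`, and its cost is strictly smaller than the cost of every symmetric integer
realization `y'` that uses no cross edge `uᵢvⱼ` (i.e. than any solution obtained by
solving the two subproblems on `{u₁,u₂,u₃}` and `{v₁,v₂,v₃}` independently). -/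
theorem stmt_15 :
    IsRealization15 r15y ∧
    ∀ y' : Vtx → Vtx → ℕ, (∀ i j, y' i j = y' j i) → (∀ i, y' i i = 0) →
      IsRealization15 y' →
      (∀ i j : Fin 3, y' (false, i) (true, j) = 0) →
      cost15 r15y < cost15 y' := by
  refine ⟨isRealization15_r15y, fun y' hsymm hdiag hreal hcross => ?_⟩
  have hno_cross : ∀ p q : Vtx, p.1 ≠ q.1 → y' p q = 0 := by
    rintro ⟨_ | _, i⟩ ⟨_ | _, j⟩ h
    · exact absurd rfl h
    · exact hcross i j
    · exact (hsymm _ _).trans (hcross j i)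
    · exact absurd rfl h
  have hside : ∀ b, 10 ≤ ∑ i, ∑ j, y' (b, i) (b, j) := fun b =>
    ten_le_sum_sum_of_symm (fun i j => hsymm _ _) (fun i => hdiag _)
      (three_le_sum_side hreal hno_cross b)
  have htotal : 20 ≤ ∑ b : Bool, ∑ i, ∑ j, y' (b, i) (b, j) := by
    rw [Fintype.sum_bool]; linarith [hside true, hside false]
  rw [cost15_r15y, cost15_of_no_cross hdiag hno_cross]
  have : (20 : ℝ) ≤ (∑ b : Bool, ∑ i, ∑ j, y' (b, i) (b, j) : ℕ) := by exact_mod_cast htotal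
  linarith
end

section
/- For any realization y of r (not necessarily integral), Σ_{e∈E(K_V)} a(e)y(e) ≥ Σ_{e∈E(T)} l(e)·R(X_e), where a is a tree metric represented by T and l. -/
/-!
Project `y` onto the tree: the load of a tree edge `e` is the total weight of the pairs `ij`
whose tree path uses `e`. In a tree, `e` lies on the `i`–`j` path exactly when deleting `e`
separates `i` from `j`, i.e. when `ij` crosses the split `X_e`, so the load of `e` is the cut
weight `y(δ(X_e))`. Exchanging sums turns `Σ a(ij) y(ij)` into `Σ l(e) y(δ(X_e))`, and the
realization property bounds each cut weight below by `R(X_e)`.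
-/

open scoped Classical

namespace SimpleGraph

variable {V : Type*} {G : SimpleGraph V} {u v x : V}

lemma Reachable.reachable_deleteEdges_or (h : G.Reachable u x) (v : V) :
    (G.deleteEdges {s(u, v)}).Reachable u x ∨ (G.deleteEdges {s(u, v)}).Reachable v x := by
  rw [reachable_iff_reflTransGen] at h
  induction h with
  | refl => exact .inl .rfl
  | @tail w z _ hwz ih =>
    by_cases he : s(w, z) = s(u, v)
    · rcases Sym2.eq_iff.1 he with ⟨-, rfl⟩ | ⟨-, rfl⟩
      · exact .inr .rfl
      · exact .inl .rfl
    · have hadj : (G.deleteEdges {s(u, v)}).Adj w z := by simp [hwz, he]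
      exact ih.imp (·.trans hadj.reachable) (·.trans hadj.reachable)

lemma Connected.reachable_deleteEdges_iff (hG : G.Connected) (e : Sym2 V) (x y z : V) :
    (G.deleteEdges {e}).Reachable x y ↔
      ((G.deleteEdges {e}).Reachable z x ↔ (G.deleteEdges {e}).Reachable z y) := by
  induction e with
  | _ u v =>
  refine ⟨fun h => ⟨(·.trans h), (·.trans h.symm)⟩, fun h => ?_⟩
  -- every vertex lies in the component of `u` or of `v`, so there are at most two components
  rcases (hG u x).reachable_deleteEdges_or v with hx | hx <;>
    rcases (hG u y).reachable_deleteEdges_or v with hy | hy <;>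
    rcases (hG u z).reachable_deleteEdges_or v with hz | hz
  all_goals grind [Reachable.trans, Reachable.symm]

lemma IsAcyclic.mem_edges_iff_not_reachable_deleteEdges (hG : G.IsAcyclic) {p : G.Walk u v}
    (hp : p.IsPath) (e : Sym2 V) : e ∈ p.edges ↔ ¬ (G.deleteEdges {e}).Reachable u v := by
  refine ⟨fun he ⟨q⟩ => ?_, p.mem_edges_of_not_reachable_deleteEdges⟩
  have hq : ∀ e' ∈ q.toPath.1.edges, e' ∈ G.edgeSet := fun e' he' =>
    (edgeSet_deleteEdges _ ▸ q.toPath.1.edges_subset_edgeSet he').1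
  have hpq : p = q.toPath.1.transfer G hq :=
    congrArg Subtype.val ((hG.subsingleton_path u v).elim ⟨p, hp⟩ ⟨_, q.toPath.2.transfer hq⟩)
  rw [hpq, Walk.edges_transfer] at he
  simpa using q.toPath.1.edges_subset_edgeSet he

lemma IsAcyclic.sum_map_edges_path {M : Type*} [AddCommMonoid M] [Fintype G.edgeSet]
    (hG : G.IsAcyclic) {p : G.Walk u v} (hp : p.IsPath) (l : Sym2 V → M) :
    (p.edges.map l).sum = ∑ e ∈ G.edgeFinset with ¬ (G.deleteEdges {e}).Reachable u v, l e := by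
  rw [← List.sum_toFinset _ hp.edges_nodup]
  congr 1
  ext e
  simp only [List.mem_toFinset, Finset.mem_filter, mem_edgeFinset,
    ← hG.mem_edges_iff_not_reachable_deleteEdges hp]
  exact ⟨fun he => ⟨p.edges_subset_edgeSet he, he⟩, And.right⟩

lemma IsTree.sum_map_edges_path_eq_sum_separating {M : Type*} [AddCommMonoid M]
    [Fintype G.edgeSet] (hG : G.IsTree) {p : G.Walk u v} (hp : p.IsPath) (v₀ : V)
    (l : Sym2 V → M) :
    (p.edges.map l).sum = ∑ e ∈ G.edgeFinset with
      ¬ ((G.deleteEdges {e}).Reachable v₀ u ↔ (G.deleteEdges {e}).Reachable v₀ v), l e := by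
  simp only [hG.isAcyclic.sum_map_edges_path hp, ← hG.connected.reachable_deleteEdges_iff]

end SimpleGraph

open Finset

section CutWeight

variable {W : Type*} [Fintype W] [DecidableEq W]

def cutWeight (y : W → W → ℝ) (X : Finset W) : ℝ := ∑ i ∈ X, ∑ j ∈ Xᶜ, y i j

lemma sum_sum_separated_eq_two_mul_cutWeight {y : W → W → ℝ} (hy : ∀ i j, y i j = y j i)
    (X : Finset W) :
    ∑ i, ∑ j, (if (i ∈ X ↔ j ∈ X) then 0 else y i j) = 2 * cutWeight y X := by
  have hrow : ∀ i, ∑ j, (if (i ∈ X ↔ j ∈ X) then 0 else y i j) =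
      if i ∈ X then ∑ j ∈ Xᶜ, y i j else ∑ j ∈ X, y i j := by
    intro i
    by_cases hi : i ∈ X
    · rw [← sum_add_sum_compl X, sum_ite_of_true (by simp [hi]),
        sum_ite_of_false (by simp +contextual [hi])]
      simp [hi]
    · rw [← sum_add_sum_compl X, sum_ite_of_false (by simp +contextual [hi]),
        sum_ite_of_true (by simp +contextual [hi])]
      simp [hi]
  rw [sum_congr rfl fun i _ => hrow i, ← sum_add_sum_compl X, sum_ite_of_true (by simp),
    sum_ite_of_false (by simp +contextual), sum_comm (s := Xᶜ)]
  simp only [hy, cutWeight]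
  ring

lemma sum_sum_mul_eq_two_mul_sum_cutWeight {ι : Type*} (E : Finset ι) (X : ι → Finset W)
    (l : ι → ℝ) {a y : W → W → ℝ} (hy : ∀ i j, y i j = y j i)
    (ha : ∀ i j, y i j ≠ 0 → a i j = ∑ e ∈ E with ¬ (i ∈ X e ↔ j ∈ X e), l e) :
    ∑ i, ∑ j, a i j * y i j = 2 * ∑ e ∈ E, l e * cutWeight y (X e) := by
  have hpair : ∀ i j, a i j * y i j =
      ∑ e ∈ E, l e * (if (i ∈ X e ↔ j ∈ X e) then 0 else y i j) := by
    intro i j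
    by_cases hyij : y i j = 0
    · simp [hyij]
    · rw [ha i j hyij, sum_filter, sum_mul]
      refine sum_congr rfl fun e _ => ?_
      split_ifs <;> simp
  calc ∑ i, ∑ j, a i j * y i j
      = ∑ e ∈ E, l e * ∑ i, ∑ j, (if (i ∈ X e ↔ j ∈ X e) then 0 else y i j) := by
        simp only [hpair, mul_sum]
        rw [sum_comm_cycle]
    _ = 2 * ∑ e ∈ E, l e * cutWeight y (X e) := by
        simp only [sum_sum_separated_eq_two_mul_cutWeight hy, mul_sum, mul_left_comm (l _) 2]

lemma natCast_sup_le_cutWeight {V X : Finset W} (hXV : X ⊆ V) (r : W → W → ℕ) {y : W → W → ℝ}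
    (hy0 : ∀ i j, 0 ≤ y i j)
    (hreal : ∀ s t : W, s ∈ V → t ∈ V → s ≠ t → ∀ X : Finset W,
      s ∈ X → t ∉ X → (r s t : ℝ) ≤ ∑ i ∈ X, ∑ j ∈ Xᶜ, y i j) :
    (((X ×ˢ (V \ X)).sup fun p => r p.1 p.2 : ℕ) : ℝ) ≤ cutWeight y X := by
  rcases (X ×ˢ (V \ X)).eq_empty_or_nonempty with hemp | hne
  · rw [hemp, sup_empty, Nat.bot_eq_zero, Nat.cast_zero]
    exact sum_nonneg fun i _ => sum_nonneg fun j _ => hy0 i j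
  · obtain ⟨⟨s, t⟩, hst, hsup⟩ := exists_mem_eq_sup _ hne fun p : W × W => r p.1 p.2
    simp only [mem_product, mem_sdiff] at hst
    rw [hsup]
    exact hreal s t (hXV hst.1) hst.2.1 (ne_of_mem_of_not_mem hst.1 hst.2.2) X hst.1 hst.2.2

end CutWeight

theorem stmt_16_general {W : Type*} [Fintype W] [DecidableEq W]
    (T : SimpleGraph W) (hT : T.IsTree)
    (V : Finset W) (v₀ : W)
    (r : W → W → ℕ)
    (l : Sym2 W → ℝ) (hl : ∀ e, 0 ≤ l e)
    (a : W → W → ℝ)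
    (ha : ∀ i j : W, i ∈ V → j ∈ V → i ≠ j →
      ∀ p : T.Walk i j, p.IsPath → a i j = (p.edges.map l).sum)
    (Xe : Sym2 W → Finset W)
    (hXe : ∀ e, Xe e = V.filter fun x => (T.deleteEdges {e}).Reachable v₀ x)
    (R : Finset W → ℕ)
    (hR : ∀ X : Finset W, R X = (X ×ˢ (V \ X)).sup fun p => r p.1 p.2)
    (y : W → W → ℝ) (hy0 : ∀ i j, 0 ≤ y i j) (hysymm : ∀ i j, y i j = y j i)
    (hyV : ∀ i j, y i j ≠ 0 → i ∈ V ∧ j ∈ V ∧ i ≠ j)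
    (hreal : ∀ s t : W, s ∈ V → t ∈ V → s ≠ t → ∀ X : Finset W,
      s ∈ X → t ∉ X → (r s t : ℝ) ≤ ∑ i ∈ X, ∑ j ∈ Xᶜ, y i j) :
    ∑ e ∈ T.edgeFinset, l e * (R (Xe e) : ℝ)
      ≤ (1 / 2) * ∑ i : W, ∑ j : W, a i j * y i j := by
  have ha_split : ∀ i j, y i j ≠ 0 →
      a i j = ∑ e ∈ T.edgeFinset with ¬ (i ∈ Xe e ↔ j ∈ Xe e), l e := by
    intro i j hyij
    obtain ⟨hi, hj, hij⟩ := hyV i j hyij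
    obtain ⟨p, hp⟩ := (hT.connected i j).some.toPath
    rw [ha i j hi hj hij p hp, hT.sum_map_edges_path_eq_sum_separating hp v₀]
    congr 1
    ext e
    simp [hXe, hi, hj]
  calc ∑ e ∈ T.edgeFinset, l e * (R (Xe e) : ℝ)
      ≤ ∑ e ∈ T.edgeFinset, l e * cutWeight y (Xe e) := by
        gcongr with e
        · exact hl e
        · rw [hR, hXe]
          exact natCast_sup_le_cutWeight (filter_subset _ _) r hy0 hreal
    _ = (1 / 2) * ∑ i : W, ∑ j : W, a i j * y i j := by
        rw [sum_sum_mul_eq_two_mul_sum_cutWeight _ _ _ hysymm ha_split]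
        ring

/-- Lower bound: for any (not necessarily integral) realization `y` of `r`,
`Σ_{e ∈ E(K_V)} a(e)·y(e) ≥ Σ_{e ∈ E(T)} l(e)·R(X_e)`, where the cost `a` is the tree
metric represented by the tree `T` and the nonnegative lengths `l` (the left-hand side
is written as half the sum over ordered pairs). -/
theorem stmt_16 {W : Type*} [Fintype W] [DecidableEq W]
    (T : SimpleGraph W) (hT : T.IsTree)
    (V : Finset W) (v₀ : W) (hv₀ : v₀ ∈ V)
    (r : W → W → ℕ) (hrsymm : ∀ i j, r i j = r j i)
    (l : Sym2 W → ℝ) (hl : ∀ e, 0 ≤ l e)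
    (a : W → W → ℝ) (hasymm : ∀ i j, a i j = a j i)
    (ha : ∀ i j : W, i ∈ V → j ∈ V → i ≠ j →
      ∀ p : T.Walk i j, p.IsPath → a i j = (p.edges.map l).sum)
    (Xe : Sym2 W → Finset W)
    (hXe : ∀ e, Xe e = V.filter fun x => (T.deleteEdges {e}).Reachable v₀ x)
    (R : Finset W → ℕ)
    (hR : ∀ X : Finset W, R X = (X ×ˢ (V \ X)).sup fun p => r p.1 p.2)
    (y : W → W → ℝ) (hy0 : ∀ i j, 0 ≤ y i j) (hysymm : ∀ i j, y i j = y j i)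
    (hyV : ∀ i j, y i j ≠ 0 → i ∈ V ∧ j ∈ V ∧ i ≠ j)
    (hreal : ∀ s t : W, s ∈ V → t ∈ V → s ≠ t → ∀ X : Finset W,
      s ∈ X → t ∉ X → (r s t : ℝ) ≤ ∑ i ∈ X, ∑ j ∈ Xᶜ, y i j) :
    ∑ e ∈ T.edgeFinset, l e * (R (Xe e) : ℝ)
      ≤ (1 / 2) * ∑ i : W, ∑ j : W, a i j * y i j :=
  stmt_16_general T hT V v₀ r l hl a ha Xe hXe R hR y hy0 hysymm hyV hreal
end
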